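/- arXiv:2011.09049 — 4 statements merged into one kernel-verified Lean document; each statement's English description precedes it below -/
import Mathlib

section
/- For the two-player cooperative game v on {1,2} defined by v(∅)=0, v({1})=0, v({2})=1, v({1,2})=1, with permission structure S(1)=∅, S(2)={1} (so the projection v' satisfies v'(E)=v(α(E)) where α(E) is the largest subset F⊆E with every member's superiors in F), the Shapley values of the projection v' are φ₁(v')=φ₂(v')=1/2, and there exist no positive weights (ω₁,ω₂) such that the weighted Shapley value of the original game v equals (1/2,1/2); i.e., φ^ω₁(v)=1/2 and φ^ω₂(v)=1/2 have no solution with ω₁,ω₂>0. -/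
open Finset
open scoped Classical

/-- Harsanyi dividend of coalition `E` in game `v`. -/
noncomputable def dividend {α : Type*} [DecidableEq α] (v : Finset α → ℝ) (E : Finset α) : ℝ :=
  ∑ F ∈ E.powerset, (-1 : ℝ) ^ (E.card - F.card) * v F

/-- Weighted Shapley value with weights `ω`. -/
noncomputable def wShapley {α : Type*} [Fintype α] [DecidableEq α]
    (ω : α → ℝ) (v : Finset α → ℝ) (i : α) : ℝ :=
  ∑ E ∈ (univ : Finset α).powerset,
    if i ∈ E then dividend v E * ω i / (∑ j ∈ E, ω j) else 0

/-- Ordinary Shapley value. -/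
noncomputable def shapley {α : Type*} [Fintype α] [DecidableEq α]
    (v : Finset α → ℝ) (i : α) : ℝ :=
  wShapley (fun _ => 1) v i

/-- `E` is autonomous in the permission structure `S`. -/
def autonomous {α : Type*} (S : α → Finset α) (E : Finset α) : Prop :=
  ∀ i ∈ E, S i ⊆ E

/-- The autonomous part `α(E)`: the union of all autonomous subsets of `E`. -/
noncomputable def autPart {α : Type*} [DecidableEq α] (S : α → Finset α) (E : Finset α) :
    Finset α :=
  (E.powerset.filter (autonomous S)).sup id

/-- The projection of `v` on the permission structure `S`. -/
noncomputable def proj {α : Type*} [DecidableEq α] (S : α → Finset α) (v : Finset α → ℝ)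
    (E : Finset α) : ℝ :=
  v (autPart S E)

/-! In dividend form `v = u_{1}`, and since `1` needs the permission of its superior `0`, the
projection is `u_{0,1}`. The weighted Shapley value of a unanimity game `u_T` splits the unit
among `T` in proportion to the weights, so the projection is split equally, whereas every
weighted Shapley value of `v` gives player `0` nothing. -/

def unanimity {α : Type*} [DecidableEq α] (T E : Finset α) : ℝ :=
  if T ⊆ E then 1 else 0

theorem unanimity_singleton {α : Type*} [DecidableEq α] (i : α) :
    unanimity {i} = fun E => if i ∈ E then 1 else 0 :=
  funext fun _ => by simp only [unanimity, singleton_subset_iff]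

theorem sum_powerset_neg_one_pow_card_real {α : Type*} [DecidableEq α] (x : Finset α) :
    ∑ m ∈ x.powerset, (-1 : ℝ) ^ #m = if x = ∅ then 1 else 0 := by
  exact_mod_cast congrArg (Int.cast : ℤ → ℝ) sum_powerset_neg_one_pow_card

theorem dividend_unanimity {α : Type*} [DecidableEq α] (T E : Finset α) :
    dividend (unanimity T) E = if E = T then 1 else 0 := by
  unfold dividend unanimity
  simp only [mul_ite, mul_one, mul_zero, ← sum_filter]
  by_cases hTE : T ⊆ E
  · -- `F ↦ E \ F` turns the sum over `T ⊆ F ⊆ E` into an alternating sum over subsets of `E \ T`.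
    have hsum : ∑ F ∈ E.powerset with T ⊆ F, (-1 : ℝ) ^ (#E - #F)
        = ∑ G ∈ (E \ T).powerset, (-1 : ℝ) ^ #G := by
      refine sum_nbij' (E \ ·) (E \ ·) ?_ ?_ ?_ ?_ ?_ <;> simp only [mem_filter, mem_powerset]
      · exact fun F hF => sdiff_subset_sdiff subset_rfl hF.2
      · exact fun G hG => ⟨sdiff_subset, subset_sdiff.2 ⟨hTE, disjoint_sdiff.mono_right hG⟩⟩
      · exact fun F hF => Finset.sdiff_sdiff_eq_self hF.1
      · exact fun G hG => Finset.sdiff_sdiff_eq_self (hG.trans sdiff_subset)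
      · exact fun F hF => by rw [card_sdiff_of_subset hF.1]
    rw [hsum, sum_powerset_neg_one_pow_card_real]
    exact if_congr (sdiff_eq_empty_iff_subset.trans ⟨fun h => h.antisymm hTE, fun h => h.le⟩)
      rfl rfl
  · have hempty : E.powerset.filter (T ⊆ ·) = ∅ :=
      filter_false_of_mem fun F hF hTF => hTE (hTF.trans (mem_powerset.1 hF))
    rw [hempty, sum_empty, if_neg (by rintro rfl; exact hTE subset_rfl)]

theorem wShapley_unanimity {α : Type*} [Fintype α] [DecidableEq α] (ω : α → ℝ)
    (T : Finset α) (i : α) :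
    wShapley ω (unanimity T) i = if i ∈ T then ω i / ∑ j ∈ T, ω j else 0 := by
  unfold wShapley
  simp only [dividend_unanimity]
  calc _ = ∑ E ∈ (univ : Finset α).powerset,
        if E = T then (if i ∈ E then ω i / ∑ j ∈ E, ω j else 0) else 0 :=
        sum_congr rfl fun E _ => by split_ifs <;> simp
    _ = _ := by rw [sum_ite_eq', if_pos (mem_powerset.2 (subset_univ T))]

theorem shapley_unanimity {α : Type*} [Fintype α] [DecidableEq α] (T : Finset α) (i : α) :
    shapley (unanimity T) i = if i ∈ T then 1 / (#T : ℝ) else 0 := by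
  simp [shapley, wShapley_unanimity]

section autPart

variable {α : Type*} [DecidableEq α] (S : α → Finset α)

theorem autPart_subset (E : Finset α) : autPart S E ⊆ E :=
  Finset.sup_le fun _ hF => mem_powerset.1 (mem_filter.1 hF).1

theorem autonomous_autPart (E : Finset α) : autonomous S (autPart S E) := by
  intro i hi
  obtain ⟨F, hF, hiF⟩ := mem_sup.1 hi
  exact ((mem_filter.1 hF).2 i hiF).trans (le_sup (f := id) hF)

theorem autPart_eq_self {E : Finset α} (hE : autonomous S E) : autPart S E = E :=
  (autPart_subset S E).antisymm (le_sup (f := id) (mem_filter.2 ⟨mem_powerset_self E, hE⟩))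

end autPart

theorem proj_chain_unanimity :
    proj (fun i : Fin 2 => if i = 1 then {0} else ∅) (unanimity {1}) = unanimity univ := by
  funext E
  simp only [proj, unanimity, singleton_subset_iff]
  refine if_congr ⟨fun h1 => ?_, fun hE => ?_⟩ rfl rfl
  · have h0 : (0 : Fin 2) ∈ autPart _ E := autonomous_autPart _ E 1 h1 (by simp)
    intro i _
    fin_cases i
    exacts [autPart_subset _ E h0, autPart_subset _ E h1]
  · rw [univ_subset_iff.1 hE, autPart_eq_self _ fun _ _ => subset_univ _]
    exact mem_univ 1

theorem stmt0 (v : Finset (Fin 2) → ℝ)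
    (hv : v = fun E => if (1 : Fin 2) ∈ E then 1 else 0)
    (S : Fin 2 → Finset (Fin 2)) (hS : S = fun i => if i = 1 then {0} else ∅) :
    shapley (proj S v) 0 = 1 / 2 ∧ shapley (proj S v) 1 = 1 / 2 ∧
      ¬ ∃ ω : Fin 2 → ℝ, (∀ i, 0 < ω i) ∧
          wShapley ω v 0 = 1 / 2 ∧ wShapley ω v 1 = 1 / 2 := by
  subst hv hS
  rw [← unanimity_singleton, proj_chain_unanimity]
  refine ⟨by simp [shapley_unanimity], by simp [shapley_unanimity], ?_⟩
  rintro ⟨ω, -, h0, -⟩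
  rw [wShapley_unanimity, if_neg (by decide)] at h0
  norm_num at h0
end

section
/- For the two-player cooperative game v on {1,2} with v(∅)=0, v({1})=1, v({2})=2, v({1,2})=4, and weights ω₁=1, ω₂=3, the weighted Shapley values are φ^ω₁(v)=5/4 and φ^ω₂(v)=11/4, and for each of the three possible permission structures on {1,2} (S(1)=S(2)=∅; S(1)=∅,S(2)={1}; S(1)={2},S(2)=∅) the Shapley value of the projected game v' differs from (5/4, 11/4). Hence no permission structure reproduces this weighted Shapley value. -/
open Finset
open scoped Classical

/-!
For two players, the weighted Shapley value of player `i` is `v {i} - v ∅` plus the share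
`ω i / (ω 0 + ω 1)` of the dividend of the grand coalition; with `ω = (1, 3)` this gives
`(5/4, 11/4)`. A projection `v'(E) = v(α(E))` of the integer-valued game `v` is again
integer-valued, so twice its (unweighted) Shapley value is an integer, which `2 · 5/4` is not.
-/

lemma sum_powerset_singleton {α β : Type*} [DecidableEq α] [AddCommMonoid β] (a : α)
    (f : Finset α → β) : ∑ t ∈ ({a} : Finset α).powerset, f t = f ∅ + f {a} := by
  rw [← insert_empty_eq, sum_powerset_insert (notMem_empty a)]
  simp

lemma dividend_singleton {α : Type*} [DecidableEq α] (v : Finset α → ℝ) (i : α) :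
    dividend v {i} = v {i} - v ∅ := by
  simp only [dividend, card_singleton, sum_powerset_singleton, card_empty, tsub_zero, pow_one,
    neg_mul, one_mul, tsub_self, pow_zero]
  ring

lemma dividend_pair {α : Type*} [DecidableEq α] (v : Finset α → ℝ) {i j : α} (h : i ≠ j) :
    dividend v {i, j} = v {i, j} - v {i} - v {j} + v ∅ := by
  simp only [dividend, card_pair h, sum_powerset_insert (notMem_singleton.2 h),
    sum_powerset_singleton, card_empty, tsub_zero, even_two, Even.neg_pow, one_pow, one_mul,
    card_singleton, Nat.add_one_sub_one, pow_one, neg_mul, insert_empty_eq, tsub_self, pow_zero]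
  ring

theorem wShapley_fin_two (ω : Fin 2 → ℝ) (v : Finset (Fin 2) → ℝ) (i : Fin 2) (hω : ω i ≠ 0) :
    wShapley ω v i = v {i} - v ∅ + (v univ - v {0} - v {1} + v ∅) * ω i / (ω 0 + ω 1) := by
  have hpow : (univ : Finset (Fin 2)).powerset = {∅, {0}, {1}, {0, 1}} := by decide
  rw [wShapley, hpow, univ_fin2]
  fin_cases i <;> simp_all +decide [sum_insert, dividend_singleton, dividend_pair]

theorem shapley_fin_two (v : Finset (Fin 2) → ℝ) (i : Fin 2) :
    shapley v i = v {i} - v ∅ + (v univ - v {0} - v {1} + v ∅) / 2 := by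
  rw [shapley, wShapley_fin_two _ _ _ one_ne_zero]
  norm_num

theorem exists_int_two_mul_shapley_fin_two {v : Finset (Fin 2) → ℝ}
    (hv : ∀ E, ∃ n : ℤ, v E = n) (i : Fin 2) : ∃ n : ℤ, 2 * shapley v i = n := by
  obtain ⟨a, ha⟩ := hv {i}
  obtain ⟨e, he⟩ := hv ∅
  obtain ⟨u, hu⟩ := hv univ
  obtain ⟨a₀, ha₀⟩ := hv {0}
  obtain ⟨a₁, ha₁⟩ := hv {1}
  refine ⟨2 * (a - e) + (u - a₀ - a₁ + e), ?_⟩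
  rw [shapley_fin_two, ha, he, hu, ha₀, ha₁]
  push_cast
  ring

theorem stmt1 (v : Finset (Fin 2) → ℝ)
    (hv : v = fun E =>
      if E = {0, 1} then 4 else if E = {1} then 2 else if E = {0} then 1 else 0)
    (ω : Fin 2 → ℝ) (hω : ω = ![1, 3]) :
    wShapley ω v 0 = 5 / 4 ∧ wShapley ω v 1 = 11 / 4 ∧
      ∀ S : Fin 2 → Finset (Fin 2), (∀ i j, j ∈ S i → i ∉ S j) →
        ¬ (shapley (proj S v) 0 = 5 / 4 ∧ shapley (proj S v) 1 = 11 / 4) := by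
  subst hω
  refine ⟨?_, ?_, fun S _ ⟨h0, _⟩ => ?_⟩
  · rw [wShapley_fin_two _ _ _ (by norm_num), univ_fin2, hv]
    norm_num +decide
  · rw [wShapley_fin_two _ _ _ (by norm_num), univ_fin2, hv]
    norm_num +decide
  · have hv_int : ∀ E, ∃ n : ℤ, v E = n := by
      intro E
      simp only [hv]
      split_ifs
      exacts [⟨4, by norm_num⟩, ⟨2, by norm_num⟩, ⟨1, by norm_num⟩, ⟨0, by norm_num⟩]
    obtain ⟨n, hn⟩ :=
      exists_int_two_mul_shapley_fin_two (v := proj S v) (fun E => hv_int (autPart S E)) 0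
    rw [h0] at hn
    have h5 : (2 * n : ℝ) = 5 := by linarith
    norm_cast at h5
    omega
end

section
/- Let v:2^N→ℝ be a super-additive cooperative game (v(E)+v(F)≤v(E∪F) whenever E∩F=∅) that is also monotone, with permission restriction P_ϱ(v)(E)=v(α(E)) for a mixed permission structure ϱ. Then P_ϱ(v) is super-additive. -/
open Finset

/-- The autonomous part of `E` relative to a family `A` of autonomous coalitions:
the union of all members of `A` contained in `E`. -/
def autPartA {α : Type*} [DecidableEq α] (A : Finset (Finset α)) (E : Finset α) : Finset α :=
  (E.powerset.filter (· ∈ A)).sup id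

section autPartA

variable {α : Type*} [DecidableEq α] (A : Finset (Finset α))

lemma autPartA_subset (E : Finset α) : autPartA A E ⊆ E :=
  Finset.sup_le fun _ hS => Finset.mem_powerset.1 (Finset.mem_filter.1 hS).1

lemma autPartA_mono : Monotone (autPartA A) := fun _ _ hEF =>
  Finset.sup_mono (Finset.filter_subset_filter _ (Finset.powerset_mono.2 hEF))

end autPartA

theorem superadditive_comp_of_subset {β M : Type*} [DecidableEq β] [Add M] [Preorder M]
    {v : Finset β → M} (hmono : Monotone v)
    (hsuper : ∀ E F : Finset β, E ∩ F = ∅ → v E + v F ≤ v (E ∪ F))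
    {f : Finset β → Finset β} (hf : ∀ E, f E ⊆ E) (hfmono : Monotone f)
    {E F : Finset β} (hEF : E ∩ F = ∅) : v (f E) + v (f F) ≤ v (f (E ∪ F)) := by
  have hdisj : f E ∩ f F = ∅ :=
    Finset.subset_empty.1 (hEF ▸ Finset.inter_subset_inter (hf E) (hf F))
  have hunion : f E ∪ f F ⊆ f (E ∪ F) :=
    Finset.union_subset (hfmono Finset.subset_union_left) (hfmono Finset.subset_union_right)
  exact (hsuper _ _ hdisj).trans (hmono hunion)

theorem stmt6_general {α : Type*} [DecidableEq α]
    (A : Finset (Finset α))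
    (v : Finset α → ℝ)
    (hmono : ∀ E F : Finset α, E ⊆ F → v E ≤ v F)
    (hsuper : ∀ E F : Finset α, E ∩ F = ∅ → v E + v F ≤ v (E ∪ F))
    (P : Finset α → ℝ) (hP : P = fun E => v (autPartA A E)) :
    ∀ E F : Finset α, E ∩ F = ∅ → P E + P F ≤ P (E ∪ F) := by
  subst hP
  exact fun _ _ hEF =>
    superadditive_comp_of_subset (fun E F => hmono E F) hsuper (autPartA_subset A)
      (autPartA_mono A) hEF

theorem stmt6 {α : Type*} [Fintype α] [DecidableEq α]
    (A : Finset (Finset α)) (hempty : ∅ ∈ A) (huniv : univ ∈ A)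
    (hunion : ∀ E ∈ A, ∀ F ∈ A, E ∪ F ∈ A)
    (v : Finset α → ℝ) (hv0 : v ∅ = 0)
    (hmono : ∀ E F : Finset α, E ⊆ F → v E ≤ v F)
    (hsuper : ∀ E F : Finset α, E ∩ F = ∅ → v E + v F ≤ v (E ∪ F))
    (P : Finset α → ℝ) (hP : P = fun E => v (autPartA A E)) :
    ∀ E F : Finset α, E ∩ F = ∅ → P E + P F ≤ P (E ∪ F) :=
  stmt6_general A v hmono hsuper P hP
end

section
/- Let v be an additive game on a rooted tree with v_i≥0 for all i, and let the reward of player i be φ'_i=∑_{k∈T_i} v_k/(d_k+1) (the Shapley value with tree permission structure). Then removing any leaf j from the tree never increases the reward of any remaining player i; in particular for the parent i of leaf j, φ'_i computed on the full tree is at least φ'_i computed on the tree without j, and the increase is at most v_j/2. Hence the Shapley value with permission structure is diffusion incentive compatible for additive games on trees. -/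
open Finset
open scoped Classical

/-- The Shapley value with tree permission structure of an additive game with
individual values `c`, computed on the player set `M`:
`φ'_i = ∑_{k ∈ T_i ∩ M} c k / (d k + 1)`. -/
noncomputable def treeReward {α : Type*} [DecidableEq α]
    (p : α → α) (d : α → ℕ) (c : α → ℝ) (M : Finset α) (i : α) : ℝ :=
  ∑ k ∈ M.filter (fun k => ∃ m : ℕ, p^[m] k = i), c k / (d k + 1)

/-! For an additive game the reward is a sum of nonnegative contributions `c k / (d k + 1)`,
one per member of the subtree, and removing a leaf `j` leaves all other depths unchanged.
So removing `j` only deletes its own contribution, which is at most `c j / 2` since `d j ≥ 1`. -/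

section

variable {α : Type*} [DecidableEq α] (p : α → α) (d : α → ℕ) {c : α → ℝ}

theorem treeReward_mono (hc : ∀ k, 0 ≤ c k) {M N : Finset α} (hMN : M ⊆ N) (i : α) :
    treeReward p d c M i ≤ treeReward p d c N i :=
  sum_le_sum_of_subset_of_nonneg (filter_subset_filter _ hMN)
    fun k _ _ => div_nonneg (hc k) (by positivity)

theorem treeReward_erase_add {M : Finset α} {i j : α} (hj : j ∈ M) (hji : ∃ m, p^[m] j = i) :
    treeReward p d c (M.erase j) i + c j / (d j + 1) = treeReward p d c M i := by
  unfold treeReward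
  rw [filter_erase]
  exact sum_erase_add _ _ (mem_filter.mpr ⟨hj, hji⟩)

end

theorem stmt13_general {α : Type*} [Fintype α] [DecidableEq α]
    (r : α) (p : α → α)
    (d : α → ℕ) (hd : ∀ i : α, i ≠ r → d i = d (p i) + 1)
    (c : α → ℝ) (hc : ∀ i, 0 ≤ c i)
    (j : α) (hj : j ≠ r) :
    (∀ i : α, i ≠ j →
      treeReward p d c ((univ : Finset α) \ {j}) i ≤ treeReward p d c univ i) ∧
    treeReward p d c ((univ : Finset α) \ {j}) (p j) ≤ treeReward p d c univ (p j) ∧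
    treeReward p d c univ (p j) - treeReward p d c ((univ : Finset α) \ {j}) (p j)
      ≤ c j / 2 := by
  have hmono : ∀ i, treeReward p d c (univ \ {j}) i ≤ treeReward p d c univ i :=
    treeReward_mono p d hc sdiff_subset
  have hgain : treeReward p d c univ (p j) - treeReward p d c (univ \ {j}) (p j)
      = c j / (d j + 1) := by
    rw [sdiff_singleton_eq_erase, ← treeReward_erase_add p d (i := p j) (mem_univ j) ⟨1, rfl⟩]
    ring
  have hdepth : (2 : ℝ) ≤ d j + 1 := by
    have : 1 ≤ d j := by rw [hd j hj]; omega
    exact_mod_cast Nat.succ_le_succ this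
  refine ⟨fun i _ => hmono i, hmono (p j), ?_⟩
  rw [hgain]
  exact div_le_div_of_nonneg_left (hc j) two_pos hdepth

theorem stmt13 {α : Type*} [Fintype α] [DecidableEq α]
    (r : α) (p : α → α) (hr : p r = r)
    (hreach : ∀ i : α, ∃ k : ℕ, p^[k] i = r)
    (d : α → ℕ) (hd0 : d r = 0) (hd : ∀ i : α, i ≠ r → d i = d (p i) + 1)
    (c : α → ℝ) (hc : ∀ i, 0 ≤ c i)
    (j : α) (hj : j ≠ r) (hleaf : ∀ k : α, k ≠ j → p k ≠ j) :
    (∀ i : α, i ≠ j →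
      treeReward p d c ((univ : Finset α) \ {j}) i ≤ treeReward p d c univ i) ∧
    treeReward p d c ((univ : Finset α) \ {j}) (p j) ≤ treeReward p d c univ (p j) ∧
    treeReward p d c univ (p j) - treeReward p d c ((univ : Finset α) \ {j}) (p j)
      ≤ c j / 2 :=
  stmt13_general r p d hd c hc j hj
end
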